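/- arXiv:1202.4338 — 2 statements merged into one kernel-verified Lean document; each statement's English description precedes it below -/
import Mathlib

section
/- Let d ≥ 1, ω ≥ 0 and M > 0. Let 𝒜 = (A_k)_{k∈ℤ+} be a sequence of linear isomorphisms of ℝ^d such that ‖A_k‖ ≤ M and ‖A_k⁻¹‖ ≤ M for all k ∈ ℤ+. If 𝒜 has Perron property B_ω(ℤ+), then 𝒜 is hyperbolic on ℤ+. -/
noncomputable section

open Filter Topology

/-- `ℝ^d`. -/
abbrev Ed (d : ℕ) := EuclideanSpace ℝ (Fin d)

/-- The weight `(|k| + 1) ^ ω`. -/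
noncomputable def wt (ω : ℝ) (k : ℤ) : ℝ := (|(k : ℝ)| + 1) ^ ω

/-- `PhiNat A l n = A (l+n-1) ∘ … ∘ A l`. -/
noncomputable def PhiNat {d : ℕ} (A : ℤ → (Ed d ≃L[ℝ] Ed d)) (l : ℤ) :
    ℕ → (Ed d ≃L[ℝ] Ed d)
  | 0 => ContinuousLinearEquiv.refl ℝ (Ed d)
  | n + 1 => (PhiNat A l n).trans (A (l + n))

/-- The Cauchy matrix `Φ_{m,l}`. -/
noncomputable def Phi {d : ℕ} (A : ℤ → (Ed d ≃L[ℝ] Ed d)) (m l : ℤ) : Ed d ≃L[ℝ] Ed d :=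
  if l ≤ m then PhiNat A l (m - l).toNat else (PhiNat A m (l - m).toNat).symm

/-- Hyperbolicity on `I` with explicit data. -/
def HyperbolicOnWith {d : ℕ} (A : ℤ → (Ed d ≃L[ℝ] Ed d)) (I : Set ℤ) (K lam : ℝ)
    (P Q : ℤ → (Ed d →L[ℝ] Ed d)) : Prop :=
  0 < K ∧ 0 < lam ∧ lam < 1 ∧
  (∀ k ∈ I, P k + Q k = 1) ∧
  (∀ k ∈ I, (P k).comp (P k) = P k ∧ (Q k).comp (Q k) = Q k) ∧
  (∀ k ∈ I, IsCompl (LinearMap.range (P k : Ed d →ₗ[ℝ] Ed d)) (LinearMap.range (Q k : Ed d →ₗ[ℝ] Ed d))) ∧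
  (∀ k ∈ I, k + 1 ∈ I →
      (A k) '' (LinearMap.range (P k : Ed d →ₗ[ℝ] Ed d) : Set (Ed d)) = (LinearMap.range (P (k + 1) : Ed d →ₗ[ℝ] Ed d) : Set (Ed d)) ∧
      (A k) '' (LinearMap.range (Q k : Ed d →ₗ[ℝ] Ed d) : Set (Ed d)) = (LinearMap.range (Q (k + 1) : Ed d →ₗ[ℝ] Ed d) : Set (Ed d))) ∧
  (∀ l ∈ I, ∀ k ∈ I, l ≤ k → ∀ v ∈ LinearMap.range (P l : Ed d →ₗ[ℝ] Ed d),
      ‖(Phi A k l) v‖ ≤ K * lam ^ (k - l).toNat * ‖v‖) ∧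
  (∀ l ∈ I, ∀ k ∈ I, k ≤ l → ∀ v ∈ LinearMap.range (Q l : Ed d →ₗ[ℝ] Ed d),
      ‖(Phi A k l) v‖ ≤ K * lam ^ (l - k).toNat * ‖v‖) ∧
  (∀ k ∈ I, ‖P k‖ ≤ K ∧ ‖Q k‖ ≤ K)

/-- The sequence `A` is hyperbolic on `I`. -/
def IsHyperbolicOn {d : ℕ} (A : ℤ → (Ed d ≃L[ℝ] Ed d)) (I : Set ℤ) : Prop :=
  ∃ (K lam : ℝ) (P Q : ℤ → (Ed d →L[ℝ] Ed d)), HyperbolicOnWith A I K lam P Q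

/-- Perron property `B_ω(ℤ+)`. -/
def PerronBPos {d : ℕ} (ω : ℝ) (A : ℤ → (Ed d ≃L[ℝ] Ed d)) : Prop :=
  ∀ f : ℤ → Ed d, f 0 = 0 → (∃ C : ℝ, ∀ k : ℤ, 0 ≤ k → ‖f k‖ * wt ω k ≤ C) →
    ∃ x : ℤ → Ed d, (∃ C : ℝ, ∀ k : ℤ, 0 ≤ k → ‖x k‖ * wt ω k ≤ C) ∧
      ∀ k : ℤ, 0 ≤ k → x (k + 1) = A k (x k) + f (k + 1)

/-- Perron property `B_ω(ℤ)`. -/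
def PerronBZ {d : ℕ} (ω : ℝ) (A : ℤ → (Ed d ≃L[ℝ] Ed d)) : Prop :=
  ∀ f : ℤ → Ed d, (∃ C : ℝ, ∀ k : ℤ, ‖f k‖ * wt ω k ≤ C) →
    ∃ x : ℤ → Ed d, (∃ C : ℝ, ∀ k : ℤ, ‖x k‖ * wt ω k ≤ C) ∧
      ∀ k : ℤ, x (k + 1) = A k (x k) + f (k + 1)

/-- `B^+(𝒜)`. -/
def Bplus {d : ℕ} (A : ℤ → (Ed d ≃L[ℝ] Ed d)) : Set (Ed d) :=
  {v | Tendsto (fun k : ℤ => ‖(Phi A k 0) v‖) atTop (𝓝 0)}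

/-- `B^-(𝒜)`. -/
def Bminus {d : ℕ} (A : ℤ → (Ed d ≃L[ℝ] Ed d)) : Set (Ed d) :=
  {v | Tendsto (fun k : ℤ => ‖(Phi A k 0) v‖) atBot (𝓝 0)}

/-!
Perron's method. The open mapping theorem turns `B_ω(ℤ+)` into uniform solvability with a constant
`L`, and the uniform boundedness principle bounds uniformly the weighted orbits starting in the
stable subspace `S` of initial values whose orbit lies in `N_ω(ℤ+)`. With
`r_j = ‖Φ_{j,0} v‖ (j + 1)^ω`, testing the equation with the forcing `r_j⁻¹ Φ_{j,0} v` on a window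
bounds the partial sums of `r_j⁻¹` by a multiple of `r_m⁻¹` when `v ∈ S`, and by a multiple of
`r_n⁻¹` when `v` lies in a complement `U` of `S`; this forces exponential decay on `S` and
exponential growth on `U`, the polynomial weight being absorbed into the rate. A single impulse at
time `n + 1` bounds the projections `Φ_{n,0} Q Φ_{n,0}⁻¹` onto `Φ_{n,0} U` along `Φ_{n,0} S`
uniformly in `n`.
-/

section Cocycle

variable {d : ℕ} (A : ℤ → (Ed d ≃L[ℝ] Ed d))

lemma phiNat_succ_eq_trans (l : ℤ) (n : ℕ) :
    PhiNat A l (n + 1) = (A l).trans (PhiNat A (l + 1) n) := by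
  induction n with
  | zero => exact ContinuousLinearEquiv.ext <| funext fun v => by simp [PhiNat]
  | succ n ih =>
    refine ContinuousLinearEquiv.ext <| funext fun v => ?_
    rw [PhiNat, ih]
    simp only [PhiNat, ContinuousLinearEquiv.trans_apply, Nat.cast_succ, add_right_comm l,
      add_assoc]

lemma phi_add_natCast_self (l : ℤ) (n : ℕ) : Phi A (l + n) l = PhiNat A l n := by
  simp [Phi]

lemma phi_self_add_natCast (k : ℤ) (n : ℕ) : Phi A k (k + n) = (PhiNat A k n).symm := by
  rcases n with _ | n
  · ext v; simp [Phi, PhiNat]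
  · rw [Phi, if_neg (by omega)]
    congr
    omega

lemma phi_self (n : ℤ) (v : Ed d) : Phi A n n v = v := by
  simpa [PhiNat] using congrArg (· v) (phi_add_natCast_self A n 0)

lemma phi_succ_apply (k n : ℤ) (v : Ed d) : Phi A (k + 1) n v = A k (Phi A k n v) := by
  rcases le_or_gt n k with h | h
  · obtain ⟨m, rfl⟩ := Int.le.dest h
    rw [show n + m + 1 = n + ((m + 1 : ℕ) : ℤ) by push_cast; ring, phi_add_natCast_self,
      phi_add_natCast_self]
    rfl
  · obtain ⟨m, rfl⟩ := Int.le.dest h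
    rw [phi_self_add_natCast, show k + 1 + m = k + ((m + 1 : ℕ) : ℤ) by push_cast; ring,
      phi_self_add_natCast, phiNat_succ_eq_trans]
    simp

lemma phi_apply_phi (k l n : ℤ) (v : Ed d) : Phi A k l (Phi A l n v) = Phi A k n v := by
  induction k using Int.inductionOn' (b := l) with
  | zero => exact phi_self A l _
  | succ k _ ih => rw [phi_succ_apply, phi_succ_apply, ih]
  | pred k _ ih =>
    apply (A (k - 1)).injective
    rw [← phi_succ_apply, ← phi_succ_apply, sub_add_cancel, ih]

def orbit (v : Ed d) (k : ℕ) : Ed d := Phi A k 0 v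

variable {A}

@[simp] lemma orbit_apply_zero (v : Ed d) : orbit A v 0 = v := phi_self A 0 v

@[simp] lemma orbit_zero : orbit A 0 = 0 := by
  ext1 k; simp [orbit]

lemma orbit_succ (v : Ed d) (k : ℕ) : orbit A v (k + 1) = A k (orbit A v k) := by
  simp only [orbit, Nat.cast_succ, phi_succ_apply]

@[simp] lemma orbit_add (u v : Ed d) : orbit A (u + v) = orbit A u + orbit A v := by
  ext1 k; simp [orbit]

@[simp] lemma orbit_smul (c : ℝ) (v : Ed d) : orbit A (c • v) = c • orbit A v := by
  ext1 k; simp [orbit]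

@[simp] lemma orbit_eq_zero_iff {v : Ed d} {k : ℕ} : orbit A v k = 0 ↔ v = 0 := by
  simp [orbit]

end Cocycle

section Weights

def natWt (ω : ℝ) (k : ℕ) : ℝ := ((k : ℝ) + 1) ^ ω

lemma natWt_pos (ω : ℝ) (k : ℕ) : 0 < natWt ω k := by unfold natWt; positivity

@[simp] lemma natWt_zero (ω : ℝ) : natWt ω 0 = 1 := by simp [natWt]

lemma wt_natCast (ω : ℝ) (k : ℕ) : wt ω k = natWt ω k := by simp [wt, natWt]

lemma natWt_mono {ω : ℝ} (hω : 0 ≤ ω) : Monotone (natWt ω) := fun k m h => by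
  unfold natWt; gcongr

lemma natWt_add_le {ω : ℝ} (hω : 0 ≤ ω) (n t : ℕ) :
    natWt ω (n + t) ≤ ((t : ℝ) + 1) ^ ω * natWt ω n := by
  rw [natWt, natWt, ← Real.mul_rpow (by positivity) (by positivity)]
  gcongr
  push_cast
  nlinarith [(n.cast_nonneg : (0 : ℝ) ≤ n), (t.cast_nonneg : (0 : ℝ) ≤ t)]

variable {E : Type*} [NormedAddCommGroup E]

/-- `x ∈ N_ω(ℤ+)`. -/
def IsWeightedBounded (ω : ℝ) (x : ℕ → E) : Prop := ∃ c, ∀ k, ‖x k‖ * natWt ω k ≤ c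

namespace IsWeightedBounded

variable {ω : ℝ} {x y : ℕ → E}

lemma zero : IsWeightedBounded ω (0 : ℕ → E) := ⟨0, fun k => by simp⟩

lemma add (hx : IsWeightedBounded ω x) (hy : IsWeightedBounded ω y) :
    IsWeightedBounded ω (x + y) := by
  obtain ⟨a, ha⟩ := hx
  obtain ⟨b, hb⟩ := hy
  refine ⟨a + b, fun k => ?_⟩
  have := mul_le_mul_of_nonneg_right (norm_add_le (x k) (y k)) (natWt_pos ω k).le
  simp only [Pi.add_apply]
  linarith [ha k, hb k]

lemma const_smul [NormedSpace ℝ E] (hx : IsWeightedBounded ω x) (c : ℝ) :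
    IsWeightedBounded ω (c • x) := by
  obtain ⟨a, ha⟩ := hx
  refine ⟨|c| * a, fun k => ?_⟩
  rw [Pi.smul_apply, norm_smul, Real.norm_eq_abs, mul_assoc]
  exact mul_le_mul_of_nonneg_left (ha k) (abs_nonneg c)

lemma sub [NormedSpace ℝ E] (hx : IsWeightedBounded ω x) (hy : IsWeightedBounded ω y) :
    IsWeightedBounded ω (x - y) := by
  simpa [sub_eq_add_neg] using hx.add (hy.const_smul (-1))

lemma congr (hx : IsWeightedBounded ω x) (h : x =ᶠ[atTop] y) : IsWeightedBounded ω y := by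
  obtain ⟨a, ha⟩ := hx
  obtain ⟨m, hm⟩ := eventually_atTop.1 h
  refine ⟨max a (∑ k ∈ Finset.range m, ‖y k‖ * natWt ω k), fun k => ?_⟩
  rcases lt_or_ge k m with hk | hk
  · refine le_max_of_le_right (Finset.single_le_sum (f := fun j => ‖y j‖ * natWt ω j)
      (fun j _ => ?_) (Finset.mem_range.2 hk))
    exact mul_nonneg (norm_nonneg _) (natWt_pos ω j).le
  · exact le_max_of_le_left (hm k hk ▸ ha k)

end IsWeightedBounded

end Weights

section Solutions

variable {ω : ℝ} {d : ℕ} {A : ℤ → (Ed d ≃L[ℝ] Ed d)}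

variable (A) in
/-- The value `f 0` plays no role (`PerronBPos` requires it to vanish). -/
def IsSolution (f x : ℕ → Ed d) : Prop :=
  ∀ k : ℕ, x (k + 1) = A k (x k) + f (k + 1)

lemma IsSolution.sub_eq_orbit {f x y : ℕ → Ed d} (hx : IsSolution A f x)
    (hy : IsSolution A f y) (k : ℕ) : y k - x k = orbit A (y 0 - x 0) k := by
  induction k with
  | zero => simp
  | succ k ih => rw [hx k, hy k, orbit_succ, ← ih, map_sub]; abel

variable (ω A) in
def stableSubspace : Submodule ℝ (Ed d) where
  carrier := {v | IsWeightedBounded ω (orbit A v)}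
  zero_mem' := by simpa using IsWeightedBounded.zero
  add_mem' hu hv := by simpa using IsWeightedBounded.add hu hv
  smul_mem' c _ hv := by simpa using IsWeightedBounded.const_smul hv c

lemma IsSolution.sub_zero_mem_stableSubspace {f x y : ℕ → Ed d} (hx : IsSolution A f x)
    (hy : IsSolution A f y) (hxy : IsWeightedBounded ω (y - x)) :
    y 0 - x 0 ∈ stableSubspace ω A := by
  show IsWeightedBounded ω (orbit A (y 0 - x 0))
  rwa [← funext (hx.sub_eq_orbit hy)]

variable (ω A) in
def IsStableBound (C : ℝ) : Prop :=
  0 ≤ C ∧ ∀ v ∈ stableSubspace ω A, ∀ k, ‖orbit A v k‖ * natWt ω k ≤ C * ‖v‖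

variable (ω A) in
theorem exists_isStableBound : ∃ C, IsStableBound ω A C := by
  let S := stableSubspace ω A
  let g : ℕ → S →L[ℝ] Ed d := fun k => natWt ω k • (Phi A k 0 : Ed d →L[ℝ] Ed d).comp S.subtypeL
  have hg : ∀ k (v : S), ‖g k v‖ = ‖orbit A v k‖ * natWt ω k := fun k v => by
    simp [g, orbit, norm_smul, abs_of_pos (natWt_pos ω k), mul_comm]
  obtain ⟨C, hC⟩ := banach_steinhaus (g := g) fun v => by
    obtain ⟨c, hc⟩ := v.2
    exact ⟨c, fun k => (hg k v).trans_le (hc k)⟩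
  refine ⟨max C 0, le_max_right _ _, fun v hv k => ?_⟩
  calc ‖orbit A v k‖ * natWt ω k = ‖g k ⟨v, hv⟩‖ := (hg k ⟨v, hv⟩).symm
    _ ≤ C * ‖v‖ := (g k).le_of_opNorm_le (hC k) _
    _ ≤ max C 0 * ‖v‖ := by gcongr; exact le_max_left _ _

/-- `y - x` is a stable orbit, hence bounded by `C ‖y 0 - x 0‖`. -/
lemma IsSolution.norm_mul_natWt_le {C B : ℝ} (hC : IsStableBound ω A C) {f x y : ℕ → Ed d}
    (hx : IsSolution A f x) (hy : IsSolution A f y) (hxB : ∀ k, ‖x k‖ * natWt ω k ≤ B)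
    (hyb : IsWeightedBounded ω y) (k : ℕ) :
    ‖y k‖ * natWt ω k ≤ C * (‖y 0‖ + B) + B := by
  have hxb : IsWeightedBounded ω x := ⟨B, hxB⟩
  have hx0 : ‖x 0‖ ≤ B := by simpa using hxB 0
  have hdiff := hC.2 _ (hx.sub_zero_mem_stableSubspace hy (hyb.sub hxb)) k
  rw [← hx.sub_eq_orbit hy] at hdiff
  have hy0 : ‖y 0 - x 0‖ ≤ ‖y 0‖ + B := (norm_sub_le _ _).trans (by gcongr)
  calc ‖y k‖ * natWt ω k ≤ ‖y k - x k‖ * natWt ω k + ‖x k‖ * natWt ω k := by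
        rw [← add_mul]
        exact mul_le_mul_of_nonneg_right (norm_le_norm_sub_add _ _) (natWt_pos ω k).le
    _ ≤ C * (‖y 0‖ + B) + B :=
        add_le_add (hdiff.trans (mul_le_mul_of_nonneg_left hy0 hC.1)) (hxB k)

/-- `y 0 - x 0` is stable, so `q (y 0) = q (x 0)`. -/
lemma IsSolution.norm_zero_le {q : Ed d →L[ℝ] Ed d} (hq : ∀ v ∈ stableSubspace ω A, q v = 0)
    {f x y : ℕ → Ed d} (hx : IsSolution A f x) (hy : IsSolution A f y)
    (hxy : IsWeightedBounded ω (y - x)) (hy0 : q (y 0) = y 0) : ‖y 0‖ ≤ ‖q‖ * ‖x 0‖ := by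
  have := hq _ (hx.sub_zero_mem_stableSubspace hy hxy)
  rw [map_sub, sub_eq_zero, hy0] at this
  exact this ▸ q.le_opNorm (x 0)

end Solutions

section Admissibility

open BoundedContinuousFunction

variable {ω M : ℝ} {d : ℕ} {A : ℤ → (Ed d ≃L[ℝ] Ed d)}

lemma PerronBPos.exists_isSolution (h : PerronBPos ω A) {f : ℕ → Ed d}
    (hf : IsWeightedBounded ω f) : ∃ x, IsWeightedBounded ω x ∧ IsSolution A f x := by
  obtain ⟨c, hc⟩ := hf
  have hc0 : 0 ≤ c := (mul_nonneg (norm_nonneg _) (natWt_pos ω 0).le).trans (hc 0)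
  obtain ⟨x, ⟨C, hC⟩, hx⟩ := h (fun k => if 0 < k then f k.toNat else 0) (by simp)
    ⟨c, fun k hk => by
      lift k to ℕ using hk
      split_ifs
      · simpa [wt_natCast] using hc k
      · simpa using hc0⟩
  refine ⟨fun k => x k, ⟨C, fun k => by simpa [wt_natCast] using hC k k.cast_nonneg⟩,
    fun k => ?_⟩
  simpa [show (0 : ℤ) < k + 1 by omega] using hx k k.cast_nonneg

lemma natWt_succ_div_le (hω : 0 ≤ ω) (k : ℕ) : natWt ω (k + 1) / natWt ω k ≤ 2 ^ ω := by
  rw [div_le_iff₀ (natWt_pos ω k)]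
  simpa [one_add_one_eq_two] using natWt_add_le hω k 1

lemma norm_wtDiff_le (hω : 0 ≤ ω) (hA : ∀ k : ℕ, ‖(A k : Ed d →L[ℝ] Ed d)‖ ≤ M)
    (y : ℕ →ᵇ Ed d) (k : ℕ) :
    ‖y (k + 1) - (natWt ω (k + 1) / natWt ω k) • A k (y k)‖ ≤ (1 + 2 ^ ω * M) * ‖y‖ := by
  have hM : 0 ≤ M := (norm_nonneg _).trans (hA 0)
  have hr : 0 ≤ natWt ω (k + 1) / natWt ω k := (div_pos (natWt_pos ω _) (natWt_pos ω k)).le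
  calc _ ≤ ‖y (k + 1)‖ + (natWt ω (k + 1) / natWt ω k) * (‖(A k : Ed d →L[ℝ] Ed d)‖ * ‖y k‖) := by
        refine (norm_sub_le _ _).trans ?_
        rw [norm_smul, Real.norm_eq_abs, abs_of_nonneg hr]
        gcongr
        exact (A k : Ed d →L[ℝ] Ed d).le_opNorm _
    _ ≤ ‖y‖ + 2 ^ ω * (M * ‖y‖) := by
        gcongr
        exacts [y.norm_coe_le_norm _, natWt_succ_div_le hω k, hA k, y.norm_coe_le_norm _]
    _ = (1 + 2 ^ ω * M) * ‖y‖ := by ring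

variable (ω A) in
/-- With `y = (k + 1)^ω • x` this is `y ↦ (k + 2)^ω • (x (k + 1) - A k (x k))`, the defining
operator of `B_ω(ℤ+)` transported to bounded sequences. -/
def wtDiff (hω : 0 ≤ ω) (hA : ∀ k : ℕ, ‖(A k : Ed d →L[ℝ] Ed d)‖ ≤ M) :
    (ℕ →ᵇ Ed d) →L[ℝ] (ℕ →ᵇ Ed d) :=
  LinearMap.mkContinuous
    { toFun := fun y => ofNormedAddCommGroup
        (fun k => y (k + 1) - (natWt ω (k + 1) / natWt ω k) • A k (y k))
        continuous_of_discreteTopology _ (norm_wtDiff_le hω hA y)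
      map_add' y z := by
        ext1 k
        simp only [coe_ofNormedAddCommGroup, coe_add, Pi.add_apply, map_add, smul_add]
        abel
      map_smul' c y := by
        ext1 k
        simp only [coe_ofNormedAddCommGroup, coe_smul, map_smul, RingHom.id_apply, smul_sub,
          smul_comm c] }
    (1 + 2 ^ ω * M) fun y =>
      (norm_le (by have := (norm_nonneg _).trans (hA 0); positivity)).2 (norm_wtDiff_le hω hA y)

lemma wtDiff_apply (hω : 0 ≤ ω) (hA : ∀ k : ℕ, ‖(A k : Ed d →L[ℝ] Ed d)‖ ≤ M)
    (y : ℕ →ᵇ Ed d) (k : ℕ) :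
    wtDiff ω A hω hA y k = y (k + 1) - (natWt ω (k + 1) / natWt ω k) • A k (y k) := rfl

lemma wtDiff_apply_of_eq_smul (hω : 0 ≤ ω) (hA : ∀ k : ℕ, ‖(A k : Ed d →L[ℝ] Ed d)‖ ≤ M)
    {y : ℕ →ᵇ Ed d} {x : ℕ → Ed d} (hxy : ∀ k, y k = natWt ω k • x k) (k : ℕ) :
    wtDiff ω A hω hA y k = natWt ω (k + 1) • (x (k + 1) - A k (x k)) := by
  rw [wtDiff_apply, hxy, hxy, map_smul, smul_smul, div_mul_cancel₀ _ (natWt_pos ω k).ne', smul_sub]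

lemma PerronBPos.wtDiff_surjective (h : PerronBPos ω A) (hω : 0 ≤ ω)
    (hA : ∀ k : ℕ, ‖(A k : Ed d →L[ℝ] Ed d)‖ ≤ M) : Function.Surjective (wtDiff ω A hω hA) := by
  intro g
  have hnorm : ∀ (k : ℕ) (v : Ed d), ‖(natWt ω k)⁻¹ • v‖ * natWt ω k = ‖v‖ := fun k v => by
    rw [norm_smul, norm_inv, Real.norm_of_nonneg (natWt_pos ω k).le,
      mul_right_comm, inv_mul_cancel₀ (natWt_pos ω k).ne', one_mul]
  obtain ⟨x, ⟨c, hc⟩, hx⟩ := h.exists_isSolution (f := fun k => (natWt ω k)⁻¹ • g (k - 1))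
    ⟨‖g‖, fun k => (hnorm k _).trans_le (g.norm_coe_le_norm _)⟩
  refine ⟨ofNormedAddCommGroup (fun k => natWt ω k • x k) continuous_of_discreteTopology c
    fun k => ?_, ?_⟩
  · rw [norm_smul, Real.norm_of_nonneg (natWt_pos ω k).le, mul_comm]
    exact hc k
  · ext1 k
    rw [wtDiff_apply_of_eq_smul hω hA (fun k => rfl), hx k, add_sub_cancel_left, smul_smul,
      mul_inv_cancel₀ (natWt_pos ω _).ne', one_smul, Nat.add_sub_cancel]

variable (ω A) in
def IsAdmissibleWith (L : ℝ) : Prop :=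
  ∀ (f : ℕ → Ed d) (c : ℝ), (∀ k, ‖f k‖ * natWt ω k ≤ c) →
    ∃ x, (∀ k, ‖x k‖ * natWt ω k ≤ L * c) ∧ IsSolution A f x

theorem PerronBPos.exists_isAdmissibleWith (h : PerronBPos ω A) (hω : 0 ≤ ω)
    (hA : ∀ k : ℕ, ‖(A k : Ed d →L[ℝ] Ed d)‖ ≤ M) : ∃ L, 0 < L ∧ IsAdmissibleWith ω A L := by
  obtain ⟨L, hL, hpre⟩ := (wtDiff ω A hω hA).exists_preimage_norm_le (h.wtDiff_surjective hω hA)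
  refine ⟨L, hL, fun f c hf => ?_⟩
  have hc : 0 ≤ c := (mul_nonneg (norm_nonneg _) (natWt_pos ω 0).le).trans (hf 0)
  have hg : ∀ k, ‖natWt ω (k + 1) • f (k + 1)‖ ≤ c := fun k => by
    rw [norm_smul, Real.norm_of_nonneg (natWt_pos ω _).le, mul_comm]
    exact hf (k + 1)
  obtain ⟨y, hyg, hy⟩ := hpre <|
    ofNormedAddCommGroup (fun k => natWt ω (k + 1) • f (k + 1)) continuous_of_discreteTopology c hg
  have hxy : ∀ k, y k = natWt ω k • (natWt ω k)⁻¹ • y k := fun k => by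
    rw [smul_smul, mul_inv_cancel₀ (natWt_pos ω k).ne', one_smul]
  refine ⟨fun k => (natWt ω k)⁻¹ • y k, fun k => ?_, fun k => ?_⟩
  · rw [norm_smul, norm_inv, Real.norm_of_nonneg (natWt_pos ω k).le,
      mul_right_comm, inv_mul_cancel₀ (natWt_pos ω k).ne', one_mul]
    exact (y.norm_coe_le_norm k).trans (hy.trans (by gcongr; exact (norm_le hc).2 hg))
  · have := congr($hyg k)
    rw [wtDiff_apply_of_eq_smul hω hA hxy, coe_ofNormedAddCommGroup] at this
    rw [← smul_right_injective (Ed d) (natWt_pos ω (k + 1)).ne' this]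
    exact (add_sub_cancel _ _).symm

end Admissibility

section PerronSums

open Finset

lemma le_div_add_one_mul_add_inv {g ρ C : ℝ} (hg : 0 ≤ g) (hρ : 0 < ρ) (h : g * ρ ≤ C) :
    g ≤ C / (C + 1) * (g + ρ⁻¹) := by
  have hgC : g ≤ C * ρ⁻¹ := by rwa [← div_eq_mul_inv, le_div_iff₀ hρ]
  rw [div_mul_eq_mul_div, le_div_iff₀ (by nlinarith)]
  nlinarith

variable {r : ℕ → ℝ} {C : ℝ}

/-- The sums `∑_{n<j≤m} r_j⁻¹` grow at least by the factor `(C + 1) / C` with each step in `m`. -/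
lemma le_mul_pow_mul_of_sum_inv_mul_le (hr : ∀ j, 0 < r j) {n : ℕ}
    (h : ∀ m, (∑ j ∈ Ioc n m, (r j)⁻¹) * r m ≤ C) (t : ℕ) :
    r (n + 1 + t) ≤ C * (C / (C + 1)) ^ t * r (n + 1) := by
  set G : ℕ → ℝ := fun m => ∑ j ∈ Ioc n m, (r j)⁻¹
  have hG : ∀ m, 0 ≤ G m := fun m => sum_nonneg fun j _ => (inv_pos.2 (hr j)).le
  have hC : 0 ≤ C := (mul_nonneg (hG n) (hr n).le).trans (h n)
  have hstep : ∀ m, n ≤ m → G m ≤ C / (C + 1) * G (m + 1) := fun m hm => by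
    have hm' : G (m + 1) * r (m + 1) ≤ C := h (m + 1)
    simp only [G, sum_Ioc_succ_top hm] at hm' ⊢
    refine le_div_add_one_mul_add_inv (hG m) (hr _) (le_trans ?_ hm')
    gcongr
    · exact (hr _).le
    · exact le_add_of_nonneg_right (inv_pos.2 (hr _)).le
  have hgrow : ∀ t, G (n + 1) ≤ (C / (C + 1)) ^ t * G (n + 1 + t) := fun t => by
    induction t with
    | zero => simp
    | succ t ih =>
      rw [pow_succ, mul_assoc]
      exact ih.trans (by gcongr; exact hstep (n + 1 + t) (by omega))
  have hG1 : G (n + 1) = (r (n + 1))⁻¹ := by simp [G]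
  have key : r (n + 1 + t) * (r (n + 1))⁻¹ ≤ C * (C / (C + 1)) ^ t :=
    calc r (n + 1 + t) * (r (n + 1))⁻¹
        ≤ r (n + 1 + t) * ((C / (C + 1)) ^ t * G (n + 1 + t)) := by
          gcongr
          · exact (hr _).le
          · exact hG1 ▸ hgrow t
      _ = (C / (C + 1)) ^ t * (G (n + 1 + t) * r (n + 1 + t)) := by ring
      _ ≤ (C / (C + 1)) ^ t * C := by gcongr; exact h _
      _ = C * (C / (C + 1)) ^ t := mul_comm _ _
  exact (mul_inv_le_iff₀ (hr _)).1 key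

/-- Mirror image of `le_mul_pow_mul_of_sum_inv_mul_le`: the sums `∑_{k<j≤m} r_j⁻¹` shrink at
least by the factor `C / (C + 1)` with each step in `k`. -/
lemma le_mul_pow_mul_of_mul_sum_inv_le (hr : ∀ j, 0 < r j) {n t : ℕ}
    (h : ∀ k, r k * ∑ j ∈ Ioc k (n + t + 1), (r j)⁻¹ ≤ C) :
    r n ≤ C * (C / (C + 1)) ^ t * r (n + t + 1) := by
  set H : ℕ → ℝ := fun k => ∑ j ∈ Ioc k (n + t + 1), (r j)⁻¹
  have hH : ∀ k, 0 ≤ H k := fun k => sum_nonneg fun j _ => (inv_pos.2 (hr j)).le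
  have hC : 0 ≤ C := (mul_nonneg (hr n).le (hH n)).trans (h n)
  have hstep : ∀ k, k < n + t + 1 → H (k + 1) ≤ C / (C + 1) * H k := fun k hk => by
    have hk' : H (k + 1) * r (k + 1) ≤ C := mul_comm (r _) (H _) ▸ h (k + 1)
    simp only [H, ← insert_Ioc_add_one_left_eq_Ioc hk, sum_insert left_notMem_Ioc] at hk' ⊢
    rw [add_comm ((r (k + 1))⁻¹)]
    exact le_div_add_one_mul_add_inv (hH _) (hr _) hk'
  have hshrink : ∀ s, s ≤ t → H (n + s) ≤ (C / (C + 1)) ^ s * H n := fun s => by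
    induction s with
    | zero => simp
    | succ s ih =>
      intro hs
      rw [pow_succ, mul_comm _ (C / _), mul_assoc, ← add_assoc]
      exact (hstep (n + s) (by omega)).trans (by gcongr; exact ih (by omega))
  have hHt : H (n + t) = (r (n + t + 1))⁻¹ := by simp [H]
  have key : r n * (r (n + t + 1))⁻¹ ≤ C * (C / (C + 1)) ^ t :=
    calc r n * (r (n + t + 1))⁻¹ ≤ r n * ((C / (C + 1)) ^ t * H n) := by
          gcongr
          · exact (hr _).le
          · exact hHt ▸ hshrink t le_rfl
      _ = (C / (C + 1)) ^ t * (r n * H n) := by ring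
      _ ≤ (C / (C + 1)) ^ t * C := by gcongr; exact h n
      _ = C * (C / (C + 1)) ^ t := mul_comm _ _
  exact (mul_inv_le_iff₀ (hr _)).1 key

end PerronSums

lemma exists_rpow_mul_pow_le (ω : ℝ) {μ : ℝ} (h0 : 0 < μ) (h1 : μ < 1) :
    ∃ B μ', 0 < μ' ∧ μ' < 1 ∧ ∀ t : ℕ, ((t : ℝ) + 1) ^ ω * μ ^ t ≤ B * μ' ^ t := by
  obtain ⟨μ', hμμ', hμ'1⟩ := exists_between h1
  have hμ' : 0 < μ' := h0.trans hμμ'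
  set q := μ / μ'
  have hq0 : 0 < q := div_pos h0 hμ'
  have hq1 : q < 1 := (div_lt_one hμ').2 hμμ'
  obtain ⟨B, hB⟩ := ((tendsto_pow_const_mul_const_pow_of_abs_lt_one ⌈ω⌉₊
    (abs_lt.2 ⟨by linarith, hq1⟩)).comp (tendsto_add_atTop_nat 1)).bddAbove_range
  refine ⟨B / q, μ', hμ', hμ'1, fun t => ?_⟩
  have ht : (1 : ℝ) ≤ t + 1 := by linarith [t.cast_nonneg (α := ℝ)]
  have hceil : ((t : ℝ) + 1) ^ ω ≤ ((t : ℝ) + 1) ^ ⌈ω⌉₊ := by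
    rw [← Real.rpow_natCast]; exact Real.rpow_le_rpow_of_exponent_le ht (Nat.le_ceil ω)
  have hbound : ((t : ℝ) + 1) ^ ⌈ω⌉₊ * q ^ (t + 1) ≤ B := by
    simpa using hB ⟨t, rfl⟩
  calc ((t : ℝ) + 1) ^ ω * μ ^ t = ((t : ℝ) + 1) ^ ω * q ^ t * μ' ^ t := by
        rw [mul_assoc, ← mul_pow, div_mul_cancel₀ _ hμ'.ne']
    _ ≤ ((t : ℝ) + 1) ^ ⌈ω⌉₊ * q ^ (t + 1) / q * μ' ^ t := by
        rw [pow_succ, ← mul_assoc, mul_div_cancel_right₀ _ hq0.ne']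
        gcongr
    _ ≤ B / q * μ' ^ t := by gcongr

section Estimates

open Finset

variable {ω M L C : ℝ} {d : ℕ} {A : ℤ → (Ed d ≃L[ℝ] Ed d)}

variable (ω A) in
def orbitWtNorm (v : Ed d) (k : ℕ) : ℝ := ‖orbit A v k‖ * natWt ω k

lemma orbitWtNorm_nonneg (v : Ed d) (k : ℕ) : 0 ≤ orbitWtNorm ω A v k :=
  mul_nonneg (norm_nonneg _) (natWt_pos ω k).le

lemma orbitWtNorm_pos {v : Ed d} (hv : v ≠ 0) (k : ℕ) : 0 < orbitWtNorm ω A v k :=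
  mul_pos (norm_pos_iff.2 (by simpa using hv)) (natWt_pos ω k)

lemma isSolution_sum_sub_smul_orbit (a : ℕ → ℝ) (T : ℝ) (v : Ed d) :
    IsSolution A (fun j => a j • orbit A v j)
      (fun k => ((∑ j ∈ range (k + 1), a j) - T) • orbit A v k) := fun k => by
  simp only [sum_range_succ, orbit_succ, map_smul]
  module

lemma sum_range_ite_mem_Ioc (g : ℕ → ℝ) (k n m : ℕ) :
    ∑ j ∈ range (k + 1), (if j ∈ Ioc n m then g j else 0) = ∑ j ∈ Ioc n (min k m), g j := by
  rw [sum_ite_mem]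
  congr 1
  ext j
  simp only [mem_inter, mem_range, mem_Ioc]
  omega

lemma norm_ite_inv_smul_orbit_mul_le (v : Ed d) (n m j : ℕ) :
    ‖(if j ∈ Ioc n m then (orbitWtNorm ω A v j)⁻¹ else 0) • orbit A v j‖ * natWt ω j ≤ 1 := by
  split_ifs
  · rw [norm_smul, norm_inv, Real.norm_of_nonneg (orbitWtNorm_nonneg v j), mul_assoc]
    exact inv_mul_le_one
  · simp

/-- Perron's test: the forcing `r_j⁻¹ • Φ_{j,0} v` on `(n, m]` is solved by
`(∑_{n<j≤min(k,m)} r_j⁻¹) • Φ_{k,0} v`, which starts at `0`. -/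
lemma sum_inv_orbitWtNorm_mul_le (hadm : IsAdmissibleWith ω A L) (hC : IsStableBound ω A C)
    {v : Ed d} (hv : v ∈ stableSubspace ω A) (n m : ℕ) :
    (∑ j ∈ Ioc n m, (orbitWtNorm ω A v j)⁻¹) * orbitWtNorm ω A v m ≤ C * L + L := by
  set a : ℕ → ℝ := fun j => if j ∈ Ioc n m then (orbitWtNorm ω A v j)⁻¹ else 0
  have hsum : ∀ k, ∑ j ∈ range (k + 1), a j = ∑ j ∈ Ioc n (min k m), (orbitWtNorm ω A v j)⁻¹ :=
    fun k => sum_range_ite_mem_Ioc _ k n m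
  obtain ⟨x, hxb, hx⟩ := hadm (fun j => a j • orbit A v j) 1 (norm_ite_inv_smul_orbit_mul_le v n m)
  have hyb : IsWeightedBounded ω (fun k => ((∑ j ∈ range (k + 1), a j) - 0) • orbit A v k) := by
    refine (IsWeightedBounded.const_smul hv (∑ j ∈ Ioc n m, (orbitWtNorm ω A v j)⁻¹)).congr ?_
    filter_upwards [eventually_ge_atTop m] with k hk
    simp [hsum, min_eq_right hk]
  have hy0 : ((∑ j ∈ range (0 + 1), a j) - 0) • orbit A v 0 = 0 := by simp [a]
  have hym : ‖((∑ j ∈ range (m + 1), a j) - 0) • orbit A v m‖ * natWt ω m =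
      (∑ j ∈ Ioc n m, (orbitWtNorm ω A v j)⁻¹) * orbitWtNorm ω A v m := by
    rw [hsum, min_self, sub_zero, norm_smul, Real.norm_of_nonneg (sum_nonneg fun j _ =>
      inv_nonneg.2 (orbitWtNorm_nonneg v j)), mul_assoc, orbitWtNorm]
  have := hx.norm_mul_natWt_le hC (isSolution_sum_sub_smul_orbit a 0 v) (by simpa using hxb) hyb m
  rwa [hym, hy0, norm_zero, zero_add] at this

/-- Perron's test again, now solved by `(∑_{n<j≤min(k,m)} r_j⁻¹ - ∑_{n<j≤m} r_j⁻¹) • Φ_{k,0} u`,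
which vanishes from `m` on and starts in the range of `q`. -/
lemma orbitWtNorm_mul_sum_inv_le (hadm : IsAdmissibleWith ω A L) (hC : IsStableBound ω A C)
    {q : Ed d →L[ℝ] Ed d} (hq : ∀ v ∈ stableSubspace ω A, q v = 0) {u : Ed d} (hu : q u = u)
    (n m : ℕ) :
    orbitWtNorm ω A u n * ∑ j ∈ Ioc n m, (orbitWtNorm ω A u j)⁻¹ ≤ C * (‖q‖ * L + L) + L := by
  set a : ℕ → ℝ := fun j => if j ∈ Ioc n m then (orbitWtNorm ω A u j)⁻¹ else 0
  set T := ∑ j ∈ Ioc n m, (orbitWtNorm ω A u j)⁻¹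
  have hsum : ∀ k, ∑ j ∈ range (k + 1), a j = ∑ j ∈ Ioc n (min k m), (orbitWtNorm ω A u j)⁻¹ :=
    fun k => sum_range_ite_mem_Ioc _ k n m
  obtain ⟨x, hxb, hx⟩ := hadm (fun j => a j • orbit A u j) 1 (norm_ite_inv_smul_orbit_mul_le u n m)
  have hy := isSolution_sum_sub_smul_orbit (A := A) a T u
  have hyb : IsWeightedBounded ω (fun k => ((∑ j ∈ range (k + 1), a j) - T) • orbit A u k) := by
    refine IsWeightedBounded.zero.congr ?_
    filter_upwards [eventually_ge_atTop m] with k hk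
    simp [hsum, min_eq_right hk, T]
  have hy0 : ‖((∑ j ∈ range (0 + 1), a j) - T) • orbit A u 0‖ ≤ ‖q‖ * L := by
    refine (hx.norm_zero_le hq hy (hyb.sub ⟨_, hxb⟩) (by simp [hu])).trans ?_
    gcongr
    simpa using hxb 0
  have hyn : ‖((∑ j ∈ range (n + 1), a j) - T) • orbit A u n‖ * natWt ω n =
      orbitWtNorm ω A u n * T := by
    rw [hsum, Ioc_eq_empty_of_le (min_le_left n m), sum_empty, zero_sub, norm_smul, norm_neg,
      Real.norm_of_nonneg (sum_nonneg fun j _ => inv_nonneg.2 (orbitWtNorm_nonneg u j)),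
      orbitWtNorm]
    ring
  calc orbitWtNorm ω A u n * T
      ≤ C * (‖((∑ j ∈ range (0 + 1), a j) - T) • orbit A u 0‖ + L) + L :=
        hyn ▸ hx.norm_mul_natWt_le hC hy (by simpa using hxb) hyb n
    _ ≤ C * (‖q‖ * L + L) + L := by gcongr; exact hC.1

lemma orbitWtNorm_succ_le (hω : 0 ≤ ω) (hA : ∀ k : ℕ, ‖(A k : Ed d →L[ℝ] Ed d)‖ ≤ M)
    (v : Ed d) (n : ℕ) : orbitWtNorm ω A v (n + 1) ≤ 2 ^ ω * M * orbitWtNorm ω A v n := by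
  have hstep : ‖orbit A v (n + 1)‖ ≤ M * ‖orbit A v n‖ := by
    rw [orbit_succ]
    exact (A n : Ed d →L[ℝ] Ed d).le_of_opNorm_le (hA n) _
  have hwt : natWt ω (n + 1) ≤ 2 ^ ω * natWt ω n :=
    (div_le_iff₀ (natWt_pos ω n)).1 (natWt_succ_div_le hω n)
  have hM : 0 ≤ M := (norm_nonneg _).trans (hA 0)
  calc orbitWtNorm ω A v (n + 1) ≤ M * ‖orbit A v n‖ * (2 ^ ω * natWt ω n) :=
        mul_le_mul hstep hwt (natWt_pos ω _).le (by positivity)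
    _ = 2 ^ ω * M * orbitWtNorm ω A v n := by unfold orbitWtNorm; ring

theorem exists_stable_estimate (hω : 0 ≤ ω) (hA : ∀ k : ℕ, ‖(A k : Ed d →L[ℝ] Ed d)‖ ≤ M)
    (hadm : IsAdmissibleWith ω A L) (hL : 0 < L) (hC : IsStableBound ω A C) :
    ∃ K μ, 0 < μ ∧ μ < 1 ∧ ∀ v ∈ stableSubspace ω A, ∀ n t : ℕ,
      ‖orbit A v (n + t)‖ ≤ K * μ ^ t * ‖orbit A v n‖ := by
  set C' := C * L + L
  have hC' : 0 < C' := by have := hC.1; positivity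
  set μ := C' / (C' + 1)
  have hμ : 0 < μ := by positivity
  refine ⟨max 1 (C' * (2 ^ ω * M) / μ), μ, hμ, (div_lt_one (by positivity)).2 (by linarith),
    fun v hv n t => ?_⟩
  rcases eq_or_ne v 0 with rfl | hv0
  · simp
  rcases t with _ | t
  · simpa using le_mul_of_one_le_left (norm_nonneg _) (le_max_left _ _)
  have hdecay := le_mul_pow_mul_of_sum_inv_mul_le (orbitWtNorm_pos hv0)
    (sum_inv_orbitWtNorm_mul_le hadm hC hv n) t
  have hw : natWt ω n ≤ natWt ω (n + 1 + t) := natWt_mono hω (by omega)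
  have key : ‖orbit A v (n + 1 + t)‖ * natWt ω n ≤
      (C' * (2 ^ ω * M) / μ * μ ^ (t + 1) * ‖orbit A v n‖) * natWt ω n :=
    calc ‖orbit A v (n + 1 + t)‖ * natWt ω n ≤ orbitWtNorm ω A v (n + 1 + t) :=
          mul_le_mul_of_nonneg_left hw (norm_nonneg _)
      _ ≤ C' * μ ^ t * (2 ^ ω * M * orbitWtNorm ω A v n) := by
          refine hdecay.trans ?_
          gcongr
          exact orbitWtNorm_succ_le hω hA v n
      _ = (C' * (2 ^ ω * M) / μ * μ ^ (t + 1) * ‖orbit A v n‖) * natWt ω n := by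
          unfold orbitWtNorm; field_simp; ring
  rw [show n + (t + 1) = n + 1 + t by omega]
  refine (le_of_mul_le_mul_right key (natWt_pos ω n)).trans ?_
  gcongr
  exact le_max_right _ _

theorem exists_unstable_estimate (hω : 0 ≤ ω) (hadm : IsAdmissibleWith ω A L) (hL : 0 < L)
    (hC : IsStableBound ω A C) {q : Ed d →L[ℝ] Ed d} (hq : ∀ v ∈ stableSubspace ω A, q v = 0) :
    ∃ K μ, 0 < μ ∧ μ < 1 ∧ ∀ u, q u = u → ∀ n t : ℕ,
      ‖orbit A u n‖ ≤ K * μ ^ t * ‖orbit A u (n + t)‖ := by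
  set C' := C * (‖q‖ * L + L) + L
  have hC' : 0 < C' := by have := hC.1; positivity
  set μ := C' / (C' + 1)
  have hμ : 0 < μ := by positivity
  obtain ⟨B, μ', hμ'0, hμ'1, hB⟩ :=
    exists_rpow_mul_pow_le ω hμ ((div_lt_one (by positivity)).2 (by linarith))
  refine ⟨max 1 (C' / μ * B), μ', hμ'0, hμ'1, fun u hu n t => ?_⟩
  rcases eq_or_ne u 0 with rfl | hu0
  · simp
  rcases t with _ | t
  · simpa using le_mul_of_one_le_left (norm_nonneg _) (le_max_left _ _)
  have hgrow := le_mul_pow_mul_of_mul_sum_inv_le (orbitWtNorm_pos hu0) (n := n) (t := t)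
    fun k => orbitWtNorm_mul_sum_inv_le hadm hC hq hu k _
  have key : ‖orbit A u n‖ * natWt ω n ≤
      (C' / μ * (((t + 1 : ℕ) : ℝ) + 1) ^ ω * μ ^ (t + 1) * ‖orbit A u (n + (t + 1))‖) *
        natWt ω n :=
    calc ‖orbit A u n‖ * natWt ω n ≤ C' * μ ^ t * orbitWtNorm ω A u (n + (t + 1)) := hgrow
      _ ≤ C' * μ ^ t * (‖orbit A u (n + (t + 1))‖ * ((((t + 1 : ℕ) : ℝ) + 1) ^ ω * natWt ω n)) := by
          unfold orbitWtNorm; gcongr; exact natWt_add_le hω n (t + 1)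
      _ = _ := by field_simp; ring
  refine (le_of_mul_le_mul_right key (natWt_pos ω n)).trans ?_
  calc C' / μ * (((t + 1 : ℕ) : ℝ) + 1) ^ ω * μ ^ (t + 1) * ‖orbit A u (n + (t + 1))‖
      = C' / μ * ((((t + 1 : ℕ) : ℝ) + 1) ^ ω * μ ^ (t + 1)) * ‖orbit A u (n + (t + 1))‖ := by ring
    _ ≤ C' / μ * (B * μ' ^ (t + 1)) * ‖orbit A u (n + (t + 1))‖ :=
        mul_le_mul_of_nonneg_right (mul_le_mul_of_nonneg_left (hB (t + 1)) (by positivity))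
          (norm_nonneg _)
    _ ≤ max 1 (C' / μ * B) * μ' ^ (t + 1) * ‖orbit A u (n + (t + 1))‖ := by
        rw [← mul_assoc]; gcongr; exact le_max_right _ _

end Estimates

section ProjectionBound

variable {ω M L C : ℝ} {d : ℕ} {A : ℤ → (Ed d ≃L[ℝ] Ed d)}

lemma isSolution_ite_orbit (s u : Ed d) (n : ℕ) :
    IsSolution A (fun j => if j = n + 1 then orbit A (s + u) (n + 1) else 0)
      (fun j => if j ≤ n then -orbit A u j else orbit A s j) := fun k => by
  rcases lt_trichotomy k n with h | rfl | h
  · simp [show k + 1 ≤ n by omega, h.le, h.ne, orbit_succ]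
  · simp [orbit_succ]
  · simp [show ¬k + 1 ≤ n by omega, show ¬k ≤ n by omega, show k ≠ n by omega, orbit_succ]

/-- Split `a` as `(a - q a) + q a` with `a - q a` stable: the orbit of `-q a` up to `n`, followed
by the orbit of `a - q a`, solves the equation forced by the single impulse `Φ_{n+1,0} a`. -/
lemma norm_orbit_apply_mul_natWt_le (hadm : IsAdmissibleWith ω A L) (hC : IsStableBound ω A C)
    {q : Ed d →L[ℝ] Ed d} (hq : IsIdempotentElem q)
    (hker : LinearMap.ker (q : Ed d →ₗ[ℝ] Ed d) = stableSubspace ω A)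
    (a : Ed d) (n : ℕ) :
    ‖orbit A (q a) n‖ * natWt ω n ≤ (C * (‖q‖ + 1) + 1) * L * orbitWtNorm ω A a (n + 1) := by
  set c := orbitWtNorm ω A a (n + 1)
  have hq0 : ∀ v ∈ stableSubspace ω A, q v = 0 := fun v hv => by rwa [← hker] at hv
  have hqq : ∀ v, q (q v) = q v := fun v => congr($(hq.eq) v)
  have hs : a - q a ∈ stableSubspace ω A := by
    rw [← hker, LinearMap.mem_ker, ContinuousLinearMap.coe_coe, map_sub, hqq, sub_self]
  have hf : ∀ j, ‖if j = n + 1 then orbit A (a - q a + q a) (n + 1) else 0‖ * natWt ω j ≤ c := by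
    intro j
    split_ifs with h
    · rw [h, sub_add_cancel]; rfl
    · simpa using orbitWtNorm_nonneg a (n + 1)
  obtain ⟨x, hxb, hx⟩ := hadm _ c hf
  have hy := isSolution_ite_orbit (A := A) (a - q a) (q a) n
  have hyb : IsWeightedBounded ω
      (fun j => if j ≤ n then -orbit A (q a) j else orbit A (a - q a) j) := by
    refine IsWeightedBounded.congr hs ?_
    filter_upwards [eventually_gt_atTop n] with j hj
    simp [not_le.2 hj]
  have hy0 : ‖orbit A (q a) 0‖ ≤ ‖q‖ * (L * c) := by
    have := hx.norm_zero_le hq0 hy (hyb.sub ⟨_, hxb⟩)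
      (by simp [hqq])
    simp only [Nat.zero_le, if_true, norm_neg] at this
    exact this.trans (by gcongr; simpa using hxb 0)
  have := hx.norm_mul_natWt_le hC hy hxb hyb n
  simp only [le_refl, Nat.zero_le, if_true, norm_neg] at this
  calc _ ≤ C * (‖q‖ * (L * c) + L * c) + L * c := this.trans (by gcongr; exact hC.1)
    _ = _ := by ring

theorem norm_conj_le (hω : 0 ≤ ω) (hA : ∀ k : ℕ, ‖(A k : Ed d →L[ℝ] Ed d)‖ ≤ M)
    (hadm : IsAdmissibleWith ω A L) (hL : 0 < L) (hC : IsStableBound ω A C)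
    {q : Ed d →L[ℝ] Ed d} (hq : IsIdempotentElem q)
    (hker : LinearMap.ker (q : Ed d →ₗ[ℝ] Ed d) = stableSubspace ω A)
    (n : ℕ) :
    ‖(Phi A n 0).conjContinuousAlgEquiv q‖ ≤ (C * (‖q‖ + 1) + 1) * L * (2 ^ ω * M) := by
  have hM : 0 ≤ M := (norm_nonneg _).trans (hA 0)
  have := hC.1
  refine ContinuousLinearMap.opNorm_le_bound _ (by positivity) fun ξ => ?_
  set a := (Phi A n 0).symm ξ
  have ha : orbit A a n = ξ := (Phi A n 0).apply_symm_apply ξ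
  refine le_of_mul_le_mul_right (?_ : _ * natWt ω n ≤ _ * natWt ω n) (natWt_pos ω n)
  calc ‖orbit A (q a) n‖ * natWt ω n
      ≤ (C * (‖q‖ + 1) + 1) * L * orbitWtNorm ω A a (n + 1) :=
        norm_orbit_apply_mul_natWt_le hadm hC hq hker a n
    _ ≤ (C * (‖q‖ + 1) + 1) * L * (2 ^ ω * M * orbitWtNorm ω A a n) := by
        gcongr; exact orbitWtNorm_succ_le hω hA a n
    _ = _ := by rw [orbitWtNorm, ha]; ring

end ProjectionBound

section Dichotomy

variable {E : Type*} [NormedAddCommGroup E] [NormedSpace ℝ E]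

lemma ContinuousLinearEquiv.coe_range_conjContinuousAlgEquiv (e : E ≃L[ℝ] E) (p : E →L[ℝ] E) :
    (LinearMap.range (e.conjContinuousAlgEquiv p : E →ₗ[ℝ] E) : Set E) = e '' Set.range p := by
  ext v
  constructor
  · rintro ⟨w, rfl⟩
    exact ⟨p (e.symm w), ⟨_, rfl⟩, rfl⟩
  · rintro ⟨_, ⟨w, rfl⟩, rfl⟩
    exact ⟨e w, by simp⟩

lemma IsIdempotentElem.isCompl_range_one_sub_range {p : E →L[ℝ] E} (hp : IsIdempotentElem p) :
    IsCompl (LinearMap.range ((1 - p : E →L[ℝ] E) : E →ₗ[ℝ] E))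
      (LinearMap.range (p : E →ₗ[ℝ] E)) := by
  have h := ContinuousLinearMap.IsIdempotentElem.toLinearMap hp.one_sub
  convert LinearMap.IsIdempotentElem.isCompl h using 1
  rw [LinearMap.IsIdempotentElem.ker_eq_range_one_sub h]
  congr
  ext v
  simp

lemma ContinuousLinearMap.norm_one_sub_le (p : E →L[ℝ] E) : ‖1 - p‖ ≤ 1 + ‖p‖ :=
  (norm_sub_le _ _).trans (by gcongr; exact ContinuousLinearMap.norm_id_le)

variable {d : ℕ} {A : ℤ → (Ed d ≃L[ℝ] Ed d)}

lemma image_phi_succ (k : ℤ) (s : Set (Ed d)) : A k '' (Phi A k 0 '' s) = Phi A (k + 1) 0 '' s := by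
  rw [Set.image_image]
  simp only [phi_succ_apply]

lemma norm_phi_le_of_mem_image_range_one_sub {q : Ed d →L[ℝ] Ed d} (hq : IsIdempotentElem q)
    {K μ : ℝ} (hS : ∀ v, q v = 0 → ∀ n t : ℕ, ‖orbit A v (n + t)‖ ≤ K * μ ^ t * ‖orbit A v n‖)
    {l : ℕ} {v : Ed d} (hv : v ∈ Phi A l 0 '' Set.range ⇑(1 - q)) (t : ℕ) :
    ‖Phi A (l + t) l v‖ ≤ K * μ ^ t * ‖v‖ := by
  obtain ⟨_, ⟨w, rfl⟩, rfl⟩ := hv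
  rw [phi_apply_phi]
  have hqq : q (q w) = q w := congr($(hq.eq) w)
  simpa [orbit] using hS ((1 - q) w) (by simp [hqq]) l t

lemma norm_phi_le_of_mem_image_range {q : Ed d →L[ℝ] Ed d} (hq : IsIdempotentElem q)
    {K μ : ℝ} (hU : ∀ u, q u = u → ∀ n t : ℕ, ‖orbit A u n‖ ≤ K * μ ^ t * ‖orbit A u (n + t)‖)
    {k : ℕ} (t : ℕ) {v : Ed d} (hv : v ∈ Phi A (k + t) 0 '' Set.range q) :
    ‖Phi A k (k + t) v‖ ≤ K * μ ^ t * ‖v‖ := by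
  obtain ⟨_, ⟨w, rfl⟩, rfl⟩ := hv
  rw [phi_apply_phi]
  simpa [orbit] using hU (q w) congr($(hq.eq) w) k t

theorem isHyperbolicOn_nonneg_of_estimates {q : Ed d →L[ℝ] Ed d} (hq : IsIdempotentElem q)
    {Ks Ku KQ μs μu : ℝ} (hμs : 0 < μs) (hμs1 : μs < 1) (hμu : 0 < μu) (hμu1 : μu < 1)
    (hS : ∀ v, q v = 0 → ∀ n t : ℕ, ‖orbit A v (n + t)‖ ≤ Ks * μs ^ t * ‖orbit A v n‖)
    (hU : ∀ u, q u = u → ∀ n t : ℕ, ‖orbit A u n‖ ≤ Ku * μu ^ t * ‖orbit A u (n + t)‖)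
    (hQ : ∀ n : ℕ, ‖(Phi A n 0).conjContinuousAlgEquiv q‖ ≤ KQ) :
    IsHyperbolicOn A {k | 0 ≤ k} := by
  set P : ℤ → (Ed d →L[ℝ] Ed d) := fun k => (Phi A k 0).conjContinuousAlgEquiv (1 - q)
  set Q : ℤ → (Ed d →L[ℝ] Ed d) := fun k => (Phi A k 0).conjContinuousAlgEquiv q
  have hPQ : ∀ k, P k = 1 - Q k := fun k => by simp only [P, Q, map_sub, map_one]
  have hQidem : ∀ k, IsIdempotentElem (Q k) := fun k => hq.map _
  have hrange : ∀ (p : Ed d →L[ℝ] Ed d) k, (LinearMap.range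
      ((Phi A k 0).conjContinuousAlgEquiv p : Ed d →ₗ[ℝ] Ed d) : Set (Ed d)) =
        Phi A k 0 '' Set.range p := fun p k => (Phi A k 0).coe_range_conjContinuousAlgEquiv p
  set K := max (max Ks Ku) KQ + 1
  have hK0 : 0 ≤ max (max Ks Ku) KQ := (norm_nonneg _).trans ((hQ 0).trans (le_max_right _ _))
  have hKs : Ks ≤ K := by simp only [K]; linarith [le_max_left Ks Ku, le_max_left (max Ks Ku) KQ]
  have hKu : Ku ≤ K := by simp only [K]; linarith [le_max_right Ks Ku, le_max_left (max Ks Ku) KQ]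
  have hKQ : 1 + KQ ≤ K := by simp only [K]; linarith [le_max_right (max Ks Ku) KQ]
  refine ⟨K, max μs μu, P, Q, by linarith, lt_max_of_lt_left hμs, max_lt hμs1 hμu1,
    fun k _ => by rw [hPQ, sub_add_cancel], fun k _ => ⟨(hPQ k ▸ (hQidem k).one_sub).eq,
    (hQidem k).eq⟩, fun k _ => hPQ k ▸ (hQidem k).isCompl_range_one_sub_range,
    fun k _ _ => ⟨by rw [hrange, hrange, image_phi_succ], by rw [hrange, hrange, image_phi_succ]⟩,
    ?_, ?_, fun k hk => ?_⟩
  · rintro l (hl : 0 ≤ l) k - hlk v hv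
    lift l to ℕ using hl
    obtain ⟨t, rfl⟩ := Int.le.dest hlk
    rw [← SetLike.mem_coe, hrange] at hv
    rw [add_sub_cancel_left, Int.toNat_natCast]
    exact (norm_phi_le_of_mem_image_range_one_sub hq hS hv t).trans
      (by gcongr; exact le_max_left _ _)
  · rintro l - k (hk : 0 ≤ k) hkl v hv
    lift k to ℕ using hk
    obtain ⟨t, rfl⟩ := Int.le.dest hkl
    rw [← SetLike.mem_coe, hrange] at hv
    rw [add_sub_cancel_left, Int.toNat_natCast]
    exact (norm_phi_le_of_mem_image_range hq hU t hv).trans (by gcongr; exact le_max_right _ _)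
  · lift k to ℕ using hk
    exact ⟨(hPQ k ▸ (Q k).norm_one_sub_le).trans (by linarith [hQ k]),
      (hQ k).trans (by linarith)⟩

end Dichotomy

lemma Submodule.exists_isIdempotentElem_ker_eq {E : Type*} [NormedAddCommGroup E]
    [NormedSpace ℝ E] [FiniteDimensional ℝ E] (S : Submodule ℝ E) :
    ∃ q : E →L[ℝ] E, IsIdempotentElem q ∧ LinearMap.ker (q : E →ₗ[ℝ] E) = S := by
  obtain ⟨U, hU⟩ := S.exists_isCompl
  refine ⟨LinearMap.toContinuousLinearMap (U.projection S hU.symm), ?_, ?_⟩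
  · rw [← ContinuousLinearMap.isIdempotentElem_toLinearMap_iff]
    exact Submodule.isIdempotentElem_projection hU.symm
  · exact Submodule.ker_projection hU.symm

theorem perron_pos_implies_hyperbolic_general (d : ℕ) (ω M : ℝ) (hω : 0 ≤ ω)
    (A : ℤ → (Ed d ≃L[ℝ] Ed d))
    (hA : ∀ k : ℤ, 0 ≤ k → ‖(A k : Ed d →L[ℝ] Ed d)‖ ≤ M ∧
      ‖((A k).symm : Ed d →L[ℝ] Ed d)‖ ≤ M)
    (hperron : PerronBPos ω A) :
    IsHyperbolicOn A {k : ℤ | 0 ≤ k} := by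
  have hA' : ∀ k : ℕ, ‖(A k : Ed d →L[ℝ] Ed d)‖ ≤ M := fun k => (hA k k.cast_nonneg).1
  obtain ⟨L, hL, hadm⟩ := hperron.exists_isAdmissibleWith hω hA'
  obtain ⟨C, hC⟩ := exists_isStableBound ω A
  obtain ⟨q, hq, hker⟩ := (stableSubspace ω A).exists_isIdempotentElem_ker_eq
  have hq0 : ∀ v ∈ stableSubspace ω A, q v = 0 := fun v hv => by rwa [← hker] at hv
  obtain ⟨Ks, μs, hμs, hμs1, hS⟩ := exists_stable_estimate hω hA' hadm hL hC
  obtain ⟨Ku, μu, hμu, hμu1, hU⟩ := exists_unstable_estimate hω hadm hL hC hq0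
  exact isHyperbolicOn_nonneg_of_estimates hq hμs hμs1 hμu hμu1
    (fun v hv => hS v (hker ▸ hv)) hU (norm_conj_le hω hA' hadm hL hC hq hker)

/-- Perron property B_ω(ℤ+) implies hyperbolicity on ℤ+. -/
theorem perron_pos_implies_hyperbolic (d : ℕ) (hd : 1 ≤ d) (ω M : ℝ) (hω : 0 ≤ ω) (hM : 0 < M)
    (A : ℤ → (Ed d ≃L[ℝ] Ed d))
    (hA : ∀ k : ℤ, 0 ≤ k → ‖(A k : Ed d →L[ℝ] Ed d)‖ ≤ M ∧
      ‖((A k).symm : Ed d →L[ℝ] Ed d)‖ ≤ M)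
    (hperron : PerronBPos ω A) :
    IsHyperbolicOn A {k : ℤ | 0 ≤ k} :=
  perron_pos_implies_hyperbolic_general d ω M hω A hA hperron
end
end

section
/- Let d ≥ 1, ω ≥ 0, and let 𝒜 = (A_k)_{k∈ℤ+} be a sequence of linear isomorphisms of ℝ^d that is hyperbolic on ℤ+ with constants K > 0, λ ∈ (0,1) and projections P_k, Q_k. Then there exists a constant C > 0, depending only on K, λ and ω, such that for every f ∈ N_ω(ℤ+) with f_0 = 0 the sequence x_k = Σ_{u=0}^{k} Φ_{k,u} P_u f_u − Σ_{u=k+1}^{∞} Φ_{k,u} Q_u f_u is well defined (the second series converges absolutely), satisfies x_{k+1} = A_k x_k + f_{k+1} for all k ≥ 0, and ‖x‖_ω ≤ C‖f‖_ω. -/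
noncomputable section

open Filter Topology

/-!
Split `f` along the dichotomy: the stable components `P u f_u` are pushed forward from the past,
the unstable ones `Q u f_u` are pulled back from the future. Both series are dominated by
`λ ^ |k - u|`, and submultiplicativity of the weight, `k + 1 ≤ (u + 1) (k - u + 1)` for
`0 ≤ u ≤ k`, turns the weighted bound into a single convergent series
`∑ λ ^ m (m + 1) ^ ω` independent of `k`. The recurrence is the cocycle identity
`Φ_{k+1,u} = A_k Φ_{k,u}` together with `P_{k+1} + Q_{k+1} = 1`.
-/

theorem PhiNat_succ_apply' {d : ℕ} (A : ℤ → (Ed d ≃L[ℝ] Ed d)) (l : ℤ) (n : ℕ) (v : Ed d) :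
    PhiNat A l (n + 1) v = PhiNat A (l + 1) n (A l v) := by
  induction n with
  | zero => simp [PhiNat]
  | succ n ih =>
    change A (l + (n + 1 : ℕ)) (PhiNat A l (n + 1) v) = A (l + 1 + n) (PhiNat A (l + 1) n (A l v))
    rw [ih]
    congr 2
    push_cast
    ring

theorem Phi_apply_of_le {d : ℕ} (A : ℤ → (Ed d ≃L[ℝ] Ed d)) {m l : ℤ} (h : l ≤ m) (v : Ed d) :
    Phi A m l v = PhiNat A l (m - l).toNat v := by
  rw [Phi, if_pos h]

theorem Phi_apply_of_ge {d : ℕ} (A : ℤ → (Ed d ≃L[ℝ] Ed d)) {m l : ℤ} (h : m ≤ l) (v : Ed d) :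
    Phi A m l v = (PhiNat A m (l - m).toNat).symm v := by
  rcases h.eq_or_lt with rfl | hlt
  · simp [Phi, PhiNat]
  · rw [Phi, if_neg hlt.not_ge]

theorem Phi_self {d : ℕ} (A : ℤ → (Ed d ≃L[ℝ] Ed d)) (k : ℤ) (v : Ed d) : Phi A k k v = v := by
  simp [Phi_apply_of_le A le_rfl, PhiNat]

theorem Phi_succ_left {d : ℕ} (A : ℤ → (Ed d ≃L[ℝ] Ed d)) (k l : ℤ) (v : Ed d) :
    Phi A (k + 1) l v = A k (Phi A k l v) := by
  rcases le_or_gt l k with hlk | hkl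
  · rw [Phi_apply_of_le A (by omega), Phi_apply_of_le A hlk,
      show (k + 1 - l).toNat = (k - l).toNat + 1 by omega]
    change A (l + (k - l).toNat) _ = _
    rw [show l + ((k - l).toNat : ℤ) = k by omega]
    rfl
  · obtain ⟨n, rfl⟩ : ∃ n : ℕ, l = k + 1 + n := ⟨(l - k - 1).toNat, by omega⟩
    rw [Phi_apply_of_ge A (by omega), Phi_apply_of_ge A (by omega),
      show (k + 1 + n - (k + 1)).toNat = n by omega, show (k + 1 + n - k).toNat = n + 1 by omega]
    apply (PhiNat A (k + 1) n).injective
    rw [ContinuousLinearEquiv.apply_symm_apply, ← PhiNat_succ_apply',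
      ContinuousLinearEquiv.apply_symm_apply]

theorem map_sum_Icc_Phi_add {d : ℕ} (A : ℤ → (Ed d ≃L[ℝ] Ed d)) (g : ℤ → Ed d) {k : ℤ}
    (hk : 0 ≤ k + 1) :
    A k (∑ u ∈ Finset.Icc (0 : ℤ) k, Phi A k u (g u)) + g (k + 1) =
      ∑ u ∈ Finset.Icc (0 : ℤ) (k + 1), Phi A (k + 1) u (g u) := by
  rw [← Finset.insert_Icc_right_eq_Icc_add_one hk, Finset.sum_insert (by simp), Phi_self,
    map_sum, add_comm]
  simp only [Phi_succ_left]

theorem map_tsum_Phi_tail {d : ℕ} (A : ℤ → (Ed d ≃L[ℝ] Ed d)) (g : ℤ → Ed d) (k : ℤ)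
    (hg : Summable fun n : ℕ => Phi A k (k + 1 + n) (g (k + 1 + n))) :
    A k (∑' n : ℕ, Phi A k (k + 1 + n) (g (k + 1 + n))) =
      g (k + 1) + ∑' n : ℕ, Phi A (k + 1) (k + 2 + n) (g (k + 2 + n)) := by
  have hshift : Summable fun n : ℕ => Phi A (k + 1) (k + 1 + n) (g (k + 1 + n)) := by
    simpa only [Phi_succ_left] using (A k).summable.mpr hg
  rw [(A k).map_tsum]
  simp only [← Phi_succ_left]
  rw [hshift.tsum_eq_zero_add]
  congr 1
  · simpa using Phi_self A (k + 1) (g (k + 1))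
  · refine tsum_congr fun n => ?_
    rw [show k + 1 + ((n + 1 : ℕ) : ℤ) = k + 2 + n by push_cast; ring]

theorem series_solution_succ {d : ℕ} (A : ℤ → (Ed d ≃L[ℝ] Ed d)) (P Q : ℤ → (Ed d →L[ℝ] Ed d))
    (f : ℤ → Ed d) {k : ℤ} (hk : 0 ≤ k + 1) (hPQ : P (k + 1) + Q (k + 1) = 1)
    (hQ : Summable fun n : ℕ => Phi A k (k + 1 + n) (Q (k + 1 + n) (f (k + 1 + n)))) :
    (∑ u ∈ Finset.Icc (0 : ℤ) (k + 1), Phi A (k + 1) u (P u (f u))) -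
        ∑' n : ℕ, Phi A (k + 1) (k + 2 + n) (Q (k + 2 + n) (f (k + 2 + n))) =
      A k ((∑ u ∈ Finset.Icc (0 : ℤ) k, Phi A k u (P u (f u))) -
        ∑' n : ℕ, Phi A k (k + 1 + n) (Q (k + 1 + n) (f (k + 1 + n)))) + f (k + 1) := by
  have hf : P (k + 1) (f (k + 1)) + Q (k + 1) (f (k + 1)) = f (k + 1) := by
    simpa using congr($hPQ (f (k + 1)))
  rw [map_sub, map_tsum_Phi_tail A (fun u => Q u (f u)) k hQ,
    ← map_sum_Icc_Phi_add A (fun u => P u (f u)) hk]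
  linear_combination (norm := module) hf

theorem one_le_wt {ω : ℝ} (hω : 0 ≤ ω) (k : ℤ) : 1 ≤ wt ω k :=
  Real.one_le_rpow (le_add_of_nonneg_left (abs_nonneg _)) hω

theorem wt_pos (ω : ℝ) (k : ℤ) : 0 < wt ω k :=
  Real.rpow_pos_of_pos (by positivity) _

theorem wt_le_wt {ω : ℝ} (hω : 0 ≤ ω) {j k : ℤ} (h : |j| ≤ |k|) : wt ω j ≤ wt ω k := by
  have h' : |(j : ℝ)| ≤ |(k : ℝ)| := by exact_mod_cast h
  unfold wt
  gcongr

theorem wt_le_wt_mul_rpow {ω : ℝ} (hω : 0 ≤ ω) {u k : ℤ} (hu : 0 ≤ u) (huk : u ≤ k) :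
    wt ω k ≤ wt ω u * (((k - u).toNat : ℝ) + 1) ^ ω := by
  have hm : (((k - u).toNat : ℤ) : ℝ) = k - u := by
    rw [Int.toNat_of_nonneg (by omega)]
    push_cast
    ring
  have hu' : (0 : ℝ) ≤ u := by exact_mod_cast hu
  have huk' : (u : ℝ) ≤ k := by exact_mod_cast huk
  unfold wt
  rw [← Real.mul_rpow (by positivity) (by positivity)]
  gcongr
  rw [abs_of_nonneg hu', abs_of_nonneg (hu'.trans huk'), ← Int.cast_natCast, hm]
  nlinarith

section WeightedBounds

variable {d : ℕ} {ω Cf : ℝ} {f : ℤ → Ed d}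

theorem norm_mul_wt_le_of_le (hω : 0 ≤ ω) (hf : ∀ k : ℤ, 0 ≤ k → ‖f k‖ * wt ω k ≤ Cf)
    {u k : ℤ} (hu : 0 ≤ u) (huk : u ≤ k) :
    ‖f u‖ * wt ω k ≤ Cf * (((k - u).toNat : ℝ) + 1) ^ ω :=
  calc ‖f u‖ * wt ω k ≤ ‖f u‖ * (wt ω u * (((k - u).toNat : ℝ) + 1) ^ ω) := by
        gcongr; exact wt_le_wt_mul_rpow hω hu huk
    _ = ‖f u‖ * wt ω u * (((k - u).toNat : ℝ) + 1) ^ ω := by ring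
    _ ≤ Cf * (((k - u).toNat : ℝ) + 1) ^ ω := by gcongr; exact hf u hu

theorem norm_mul_wt_le_of_ge (hω : 0 ≤ ω) (hf : ∀ k : ℤ, 0 ≤ k → ‖f k‖ * wt ω k ≤ Cf)
    {k l : ℤ} (hk : 0 ≤ k) (hkl : k ≤ l) : ‖f l‖ * wt ω k ≤ Cf :=
  calc ‖f l‖ * wt ω k ≤ ‖f l‖ * wt ω l := by
        gcongr
        exact wt_le_wt hω (abs_le_abs_of_nonneg hk hkl)
    _ ≤ Cf := hf l (hk.trans hkl)

theorem nonneg_of_forall_norm_mul_wt_le (hf : ∀ k : ℤ, 0 ≤ k → ‖f k‖ * wt ω k ≤ Cf) : 0 ≤ Cf :=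
  (mul_nonneg (norm_nonneg _) (wt_pos ω 0).le).trans (hf 0 le_rfl)

end WeightedBounds

def weightedGeomSum (ω lam : ℝ) : ℝ := ∑' m : ℕ, lam ^ m * ((m : ℝ) + 1) ^ ω

theorem summable_pow_mul_add_one_rpow (ω : ℝ) {lam : ℝ} (h0 : 0 < lam) (h1 : lam < 1) :
    Summable fun m : ℕ => lam ^ m * ((m : ℝ) + 1) ^ ω := by
  obtain ⟨N, hN⟩ := exists_nat_ge ω
  have hshift : Summable fun m : ℕ => ((m + 1 : ℕ) : ℝ) ^ N * lam ^ (m + 1) :=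
    (summable_nat_add_iff (f := fun n : ℕ => (n : ℝ) ^ N * lam ^ n) 1).mpr
      (summable_pow_mul_geometric_of_norm_lt_one N (by rwa [Real.norm_of_nonneg h0.le]))
  refine .of_nonneg_of_le (fun m => mul_nonneg (pow_nonneg h0.le m) (by positivity))
    (fun m => ?_) (hshift.mul_left lam⁻¹)
  have hm : (1 : ℝ) ≤ m + 1 := by linarith [m.cast_nonneg (α := ℝ)]
  calc lam ^ m * ((m : ℝ) + 1) ^ ω ≤ lam ^ m * ((m : ℝ) + 1) ^ (N : ℝ) :=
        mul_le_mul_of_nonneg_left (Real.rpow_le_rpow_of_exponent_le hm hN) (pow_nonneg h0.le m)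
    _ = lam⁻¹ * (((m + 1 : ℕ) : ℝ) ^ N * lam ^ (m + 1)) := by
        rw [Real.rpow_natCast, pow_succ, Nat.cast_succ, inv_mul_eq_div, eq_div_iff h0.ne']
        ring

theorem one_le_weightedGeomSum (ω : ℝ) {lam : ℝ} (h0 : 0 < lam) (h1 : lam < 1) :
    1 ≤ weightedGeomSum ω lam := by
  simpa [weightedGeomSum] using (summable_pow_mul_add_one_rpow ω h0 h1).le_tsum 0
    fun m _ => mul_nonneg (pow_nonneg h0.le m) (by positivity)

theorem sum_Icc_toNat_sub_le_tsum {g : ℕ → ℝ} (hg : Summable g) (hg0 : ∀ m, 0 ≤ g m) (k : ℤ) :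
    ∑ u ∈ Finset.Icc (0 : ℤ) k, g (k - u).toNat ≤ ∑' m, g m := by
  classical
  rw [← Finset.sum_image (g := fun u => (k - u).toNat) fun x hx y hy hxy => by
    simp only [Finset.coe_Icc, Set.mem_Icc] at hx hy hxy; omega]
  exact hg.sum_le_tsum _ fun m _ => hg0 m

namespace HyperbolicOnWith

variable {d : ℕ} {A : ℤ → (Ed d ≃L[ℝ] Ed d)} {I : Set ℤ} {K lam : ℝ}
  {P Q : ℤ → (Ed d →L[ℝ] Ed d)}

theorem lam_pos (h : HyperbolicOnWith A I K lam P Q) : 0 < lam :=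
  h.2.1

theorem lam_lt_one (h : HyperbolicOnWith A I K lam P Q) : lam < 1 :=
  h.2.2.1

theorem add_eq_one (h : HyperbolicOnWith A I K lam P Q) {k : ℤ} (hk : k ∈ I) :
    P k + Q k = 1 :=
  h.2.2.2.1 k hk

theorem norm_Phi_P_le (h : HyperbolicOnWith A I K lam P Q) {u k : ℤ} (hu : u ∈ I) (hk : k ∈ I)
    (huk : u ≤ k) (v : Ed d) : ‖Phi A k u (P u v)‖ ≤ K ^ 2 * lam ^ (k - u).toNat * ‖v‖ := by
  obtain ⟨hK, hlam, -, -, -, -, -, hP, -, hnorm⟩ := h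
  calc ‖Phi A k u (P u v)‖ ≤ K * lam ^ (k - u).toNat * ‖P u v‖ := hP u hu k hk huk _ ⟨v, rfl⟩
    _ ≤ K * lam ^ (k - u).toNat * (K * ‖v‖) :=
        mul_le_mul_of_nonneg_left ((P u).le_of_opNorm_le (hnorm u hu).1 v)
          (mul_nonneg hK.le (pow_nonneg hlam.le _))
    _ = K ^ 2 * lam ^ (k - u).toNat * ‖v‖ := by ring

theorem norm_Phi_Q_le (h : HyperbolicOnWith A I K lam P Q) {k l : ℤ} (hk : k ∈ I) (hl : l ∈ I)
    (hkl : k ≤ l) (v : Ed d) : ‖Phi A k l (Q l v)‖ ≤ K ^ 2 * lam ^ (l - k).toNat * ‖v‖ := by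
  obtain ⟨hK, hlam, -, -, -, -, -, -, hQ, hnorm⟩ := h
  calc ‖Phi A k l (Q l v)‖ ≤ K * lam ^ (l - k).toNat * ‖Q l v‖ := hQ l hl k hk hkl _ ⟨v, rfl⟩
    _ ≤ K * lam ^ (l - k).toNat * (K * ‖v‖) :=
        mul_le_mul_of_nonneg_left ((Q l).le_of_opNorm_le (hnorm l hl).2 v)
          (mul_nonneg hK.le (pow_nonneg hlam.le _))
    _ = K ^ 2 * lam ^ (l - k).toNat * ‖v‖ := by ring

variable {ω Cf : ℝ} {f : ℤ → Ed d}

theorem norm_Phi_P_mul_wt_le (h : HyperbolicOnWith A {k : ℤ | 0 ≤ k} K lam P Q) (hω : 0 ≤ ω)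
    (hf : ∀ k : ℤ, 0 ≤ k → ‖f k‖ * wt ω k ≤ Cf) {u k : ℤ} (hu : 0 ≤ u) (huk : u ≤ k) :
    ‖Phi A k u (P u (f u))‖ * wt ω k ≤
      K ^ 2 * Cf * (lam ^ (k - u).toNat * (((k - u).toNat : ℝ) + 1) ^ ω) :=
  calc _ ≤ K ^ 2 * lam ^ (k - u).toNat * ‖f u‖ * wt ω k :=
        mul_le_mul_of_nonneg_right (h.norm_Phi_P_le hu (hu.trans huk) huk _) (wt_pos ω k).le
    _ = K ^ 2 * lam ^ (k - u).toNat * (‖f u‖ * wt ω k) := by ring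
    _ ≤ K ^ 2 * lam ^ (k - u).toNat * (Cf * (((k - u).toNat : ℝ) + 1) ^ ω) :=
        mul_le_mul_of_nonneg_left (norm_mul_wt_le_of_le hω hf hu huk)
          (mul_nonneg (sq_nonneg K) (pow_nonneg h.lam_pos.le _))
    _ = _ := by ring

theorem norm_Phi_Q_mul_wt_le (h : HyperbolicOnWith A {k : ℤ | 0 ≤ k} K lam P Q) (hω : 0 ≤ ω)
    (hf : ∀ k : ℤ, 0 ≤ k → ‖f k‖ * wt ω k ≤ Cf) {k : ℤ} (hk : 0 ≤ k) (n : ℕ) :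
    ‖Phi A k (k + 1 + n) (Q (k + 1 + n) (f (k + 1 + n)))‖ * wt ω k ≤
      K ^ 2 * Cf * (lam ^ n * ((n : ℝ) + 1) ^ ω) := by
  have hlam : 0 ≤ lam := h.lam_pos.le
  have hCf : 0 ≤ Cf := nonneg_of_forall_norm_mul_wt_le hf
  have hpow : lam ^ (n + 1) ≤ lam ^ n * ((n : ℝ) + 1) ^ ω :=
    calc lam ^ (n + 1) ≤ lam ^ n := pow_le_pow_of_le_one hlam h.lam_lt_one.le n.le_succ
      _ ≤ lam ^ n * ((n : ℝ) + 1) ^ ω := le_mul_of_one_le_right (pow_nonneg hlam n)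
          (Real.one_le_rpow (by linarith [n.cast_nonneg (α := ℝ)]) hω)
  have hPhi := h.norm_Phi_Q_le hk (show 0 ≤ k + 1 + n by omega) (by omega) (f (k + 1 + n))
  rw [show (k + 1 + n - k).toNat = n + 1 by omega] at hPhi
  calc _ ≤ K ^ 2 * lam ^ (n + 1) * ‖f (k + 1 + n)‖ * wt ω k :=
        mul_le_mul_of_nonneg_right hPhi (wt_pos ω k).le
    _ = K ^ 2 * lam ^ (n + 1) * (‖f (k + 1 + n)‖ * wt ω k) := by ring
    _ ≤ K ^ 2 * lam ^ (n + 1) * Cf :=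
        mul_le_mul_of_nonneg_left (norm_mul_wt_le_of_ge hω hf hk (by omega))
          (mul_nonneg (sq_nonneg K) (pow_nonneg hlam _))
    _ ≤ K ^ 2 * (lam ^ n * ((n : ℝ) + 1) ^ ω) * Cf := by gcongr
    _ = _ := by ring

theorem summable_norm_Phi_Q_tail (h : HyperbolicOnWith A {k : ℤ | 0 ≤ k} K lam P Q)
    (hω : 0 ≤ ω) (hf : ∀ k : ℤ, 0 ≤ k → ‖f k‖ * wt ω k ≤ Cf) {k : ℤ} (hk : 0 ≤ k) :
    Summable fun n : ℕ => ‖Phi A k (k + 1 + n) (Q (k + 1 + n) (f (k + 1 + n)))‖ :=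
  .of_nonneg_of_le (fun _ => norm_nonneg _)
    (fun n => (le_mul_of_one_le_right (norm_nonneg _) (one_le_wt hω k)).trans
      (h.norm_Phi_Q_mul_wt_le hω hf hk n))
    ((summable_pow_mul_add_one_rpow ω h.lam_pos h.lam_lt_one).mul_left _)

theorem norm_sum_Phi_P_mul_wt_le (h : HyperbolicOnWith A {k : ℤ | 0 ≤ k} K lam P Q)
    (hω : 0 ≤ ω) (hf : ∀ k : ℤ, 0 ≤ k → ‖f k‖ * wt ω k ≤ Cf) (k : ℤ) :
    ‖∑ u ∈ Finset.Icc (0 : ℤ) k, Phi A k u (P u (f u))‖ * wt ω k ≤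
      K ^ 2 * Cf * weightedGeomSum ω lam :=
  calc _ ≤ ∑ u ∈ Finset.Icc (0 : ℤ) k, ‖Phi A k u (P u (f u))‖ * wt ω k := by
        rw [← Finset.sum_mul]
        exact mul_le_mul_of_nonneg_right (norm_sum_le _ _) (wt_pos ω k).le
    _ ≤ ∑ u ∈ Finset.Icc (0 : ℤ) k,
          K ^ 2 * Cf * (lam ^ (k - u).toNat * (((k - u).toNat : ℝ) + 1) ^ ω) :=
        Finset.sum_le_sum fun u hu =>
          h.norm_Phi_P_mul_wt_le hω hf (Finset.mem_Icc.mp hu).1 (Finset.mem_Icc.mp hu).2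
    _ ≤ K ^ 2 * Cf * weightedGeomSum ω lam := by
        rw [← Finset.mul_sum]
        exact mul_le_mul_of_nonneg_left
          (sum_Icc_toNat_sub_le_tsum (summable_pow_mul_add_one_rpow ω h.lam_pos h.lam_lt_one)
            (fun m => mul_nonneg (pow_nonneg h.lam_pos.le m) (by positivity)) k)
          (mul_nonneg (sq_nonneg K) (nonneg_of_forall_norm_mul_wt_le hf))

theorem norm_tsum_Phi_Q_mul_wt_le (h : HyperbolicOnWith A {k : ℤ | 0 ≤ k} K lam P Q)
    (hω : 0 ≤ ω) (hf : ∀ k : ℤ, 0 ≤ k → ‖f k‖ * wt ω k ≤ Cf) {k : ℤ} (hk : 0 ≤ k) :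
    ‖∑' n : ℕ, Phi A k (k + 1 + n) (Q (k + 1 + n) (f (k + 1 + n)))‖ * wt ω k ≤
      K ^ 2 * Cf * weightedGeomSum ω lam := by
  have hsum := h.summable_norm_Phi_Q_tail hω hf hk
  calc _ ≤ (∑' n : ℕ, ‖Phi A k (k + 1 + n) (Q (k + 1 + n) (f (k + 1 + n)))‖) * wt ω k :=
        mul_le_mul_of_nonneg_right (norm_tsum_le_tsum_norm hsum) (wt_pos ω k).le
    _ = ∑' n : ℕ, ‖Phi A k (k + 1 + n) (Q (k + 1 + n) (f (k + 1 + n)))‖ * wt ω k :=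
        tsum_mul_right.symm
    _ ≤ ∑' n : ℕ, K ^ 2 * Cf * (lam ^ n * ((n : ℝ) + 1) ^ ω) :=
        Summable.tsum_le_tsum (h.norm_Phi_Q_mul_wt_le hω hf hk) (hsum.mul_right _)
          ((summable_pow_mul_add_one_rpow ω h.lam_pos h.lam_lt_one).mul_left _)
    _ = K ^ 2 * Cf * weightedGeomSum ω lam := tsum_mul_left

end HyperbolicOnWith

/-- for a hyperbolic sequence on ℤ+, the explicit series gives a solution with
norm bound `C‖f‖_ω`, where `C` depends only on `K`, `λ` and `ω`. -/
theorem hyperbolic_series_solution (ω K lam : ℝ) (hω : 0 ≤ ω) (hK : 0 < K)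
    (hlam0 : 0 < lam) (hlam1 : lam < 1) :
    ∃ C : ℝ, 0 < C ∧
      ∀ (d : ℕ), 1 ≤ d →
        ∀ (A : ℤ → (Ed d ≃L[ℝ] Ed d)) (P Q : ℤ → (Ed d →L[ℝ] Ed d)),
          HyperbolicOnWith A {k : ℤ | 0 ≤ k} K lam P Q →
          ∀ f : ℤ → Ed d, f 0 = 0 → ∀ Cf : ℝ, (∀ k : ℤ, 0 ≤ k → ‖f k‖ * wt ω k ≤ Cf) →
            (∀ k : ℤ, 0 ≤ k → Summable fun n : ℕ =>
              ‖(Phi A k (k + 1 + n)) (Q (k + 1 + n) (f (k + 1 + n)))‖) ∧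
            (∀ k : ℤ, 0 ≤ k →
              (∑ u ∈ Finset.Icc (0 : ℤ) (k + 1), (Phi A (k + 1) u) (P u (f u))) -
                  (∑' n : ℕ, (Phi A (k + 1) (k + 2 + n)) (Q (k + 2 + n) (f (k + 2 + n)))) =
                A k ((∑ u ∈ Finset.Icc (0 : ℤ) k, (Phi A k u) (P u (f u))) -
                  ∑' n : ℕ, (Phi A k (k + 1 + n)) (Q (k + 1 + n) (f (k + 1 + n)))) + f (k + 1)) ∧
            (∀ k : ℤ, 0 ≤ k →
              ‖(∑ u ∈ Finset.Icc (0 : ℤ) k, (Phi A k u) (P u (f u))) -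
                  ∑' n : ℕ, (Phi A k (k + 1 + n)) (Q (k + 1 + n) (f (k + 1 + n)))‖ * wt ω k ≤
                C * Cf) := by
  have hS := one_le_weightedGeomSum ω hlam0 hlam1
  refine ⟨2 * K ^ 2 * weightedGeomSum ω lam, by positivity, ?_⟩
  intro d _ A P Q h f _ Cf hf
  refine ⟨fun k hk => h.summable_norm_Phi_Q_tail hω hf hk, fun k hk => ?_, fun k hk => ?_⟩
  · exact series_solution_succ A P Q f (by omega) (h.add_eq_one (show 0 ≤ k + 1 by omega))
      (h.summable_norm_Phi_Q_tail hω hf hk).of_norm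
  · calc _ ≤ (‖∑ u ∈ Finset.Icc (0 : ℤ) k, Phi A k u (P u (f u))‖ +
          ‖∑' n : ℕ, Phi A k (k + 1 + n) (Q (k + 1 + n) (f (k + 1 + n)))‖) * wt ω k :=
          mul_le_mul_of_nonneg_right (norm_sub_le _ _) (wt_pos ω k).le
      _ ≤ K ^ 2 * Cf * weightedGeomSum ω lam + K ^ 2 * Cf * weightedGeomSum ω lam := by
          rw [add_mul]
          exact add_le_add (h.norm_sum_Phi_P_mul_wt_le hω hf k)
            (h.norm_tsum_Phi_Q_mul_wt_le hω hf hk)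
      _ = 2 * K ^ 2 * weightedGeomSum ω lam * Cf := by ring
end
end
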